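/- Under the setup X* = U*B*, G = UᵀX*, with ‖B − G‖_F ≤ δσ*max and SE_2(U,U*) := ‖(I − U*U*ᵀ)U‖ ≤ δ, the singular values of B satisfy σ_max(B) ≤ (1+δ)σ*max and σ_min(B) ≥ √(1−δ²)·σ*min − δσ*max, where σ*max, σ*min are the extreme singular values of B*. In particular, if δ ≤ 0.01/κ with κ = σ*max/σ*min, then σ_min(B) ≥ 0.9 σ*min and σ_max(B) ≤ 1.1 σ*max. -/
import Mathlib

open Matrix BigOperators

noncomputable def vnorm {m : ℕ} (v : Fin m → ℝ) : ℝ := Real.sqrt (∑ i, v i ^ 2)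

noncomputable def fnorm {m k : ℕ} (M : Matrix (Fin m) (Fin k) ℝ) : ℝ :=
  Real.sqrt (∑ j, ∑ i, M j i ^ 2)

noncomputable def opnorm {m k : ℕ} (M : Matrix (Fin m) (Fin k) ℝ) : ℝ :=
  sSup {c | ∃ x : Fin k → ℝ, vnorm x = 1 ∧ c = vnorm (M.mulVec x)}

noncomputable def smin {m k : ℕ} (M : Matrix (Fin m) (Fin k) ℝ) : ℝ :=
  sInf {c | ∃ x : Fin m → ℝ, vnorm x = 1 ∧ c = vnorm (M.vecMul x)}

lemma vnorm_nonneg {m : ℕ} (v : Fin m → ℝ) : 0 ≤ vnorm v := Real.sqrt_nonneg _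

lemma vnorm_sq {m : ℕ} (v : Fin m → ℝ) : vnorm v ^ 2 = ∑ i, v i ^ 2 :=
  Real.sq_sqrt (by positivity)

lemma vnorm_sq_eq_dot {m : ℕ} (v : Fin m → ℝ) : vnorm v ^ 2 = v ⬝ᵥ v := by
  rw [vnorm_sq]; simp [dotProduct, sq]

lemma vnorm_eq_sqrt_dot {m : ℕ} (v : Fin m → ℝ) : vnorm v = Real.sqrt (v ⬝ᵥ v) := by
  rw [vnorm]; congr 1; simp [dotProduct, sq]

lemma dot_le {m : ℕ} (x y : Fin m → ℝ) : x ⬝ᵥ y ≤ vnorm x * vnorm y :=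
  Real.sum_mul_le_sqrt_mul_sqrt Finset.univ x y

lemma sq_imp_le {a b : ℝ} (ha : 0 ≤ a) (hb : 0 ≤ b) (h : a ^ 2 ≤ b ^ 2) : a ≤ b := by
  nlinarith

lemma vnorm_eq_zero {m : ℕ} {v : Fin m → ℝ} (h : vnorm v = 0) : v = 0 := by
  have h2 : (∑ i, v i ^ 2) = 0 := by
    have := vnorm_sq v
    rw [h] at this; simpa using this.symm
  funext i
  have := (Finset.sum_eq_zero_iff_of_nonneg (fun i _ => sq_nonneg (v i))).1 h2 i (Finset.mem_univ i)
  exact pow_eq_zero_iff (n := 2) (by norm_num) |>.1 this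

lemma vnorm_zero {m : ℕ} : vnorm (0 : Fin m → ℝ) = 0 := by simp [vnorm]

lemma vnorm_smul {m : ℕ} (c : ℝ) (v : Fin m → ℝ) : vnorm (c • v) = |c| * vnorm v := by
  simp only [vnorm, Pi.smul_apply, smul_eq_mul, mul_pow, ← Finset.mul_sum]
  rw [Real.sqrt_mul (sq_nonneg c), Real.sqrt_sq_eq_abs]

lemma vnorm_add_le {m : ℕ} (x y : Fin m → ℝ) : vnorm (x + y) ≤ vnorm x + vnorm y := by
  have h1 := dot_le x y
  have h2 : vnorm (x + y) ^ 2 = vnorm x ^ 2 + 2 * (x ⬝ᵥ y) + vnorm y ^ 2 := by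
    rw [vnorm_sq_eq_dot, vnorm_sq_eq_dot, vnorm_sq_eq_dot, add_dotProduct, dotProduct_add,
      dotProduct_add, dotProduct_comm y x]; ring
  refine sq_imp_le (vnorm_nonneg _) (add_nonneg (vnorm_nonneg x) (vnorm_nonneg y)) ?_
  nlinarith [vnorm_nonneg x, vnorm_nonneg y]

lemma fnorm_nonneg {m k : ℕ} (M : Matrix (Fin m) (Fin k) ℝ) : 0 ≤ fnorm M := Real.sqrt_nonneg _

lemma mulVec_le_fnorm {m k : ℕ} (M : Matrix (Fin m) (Fin k) ℝ) (x : Fin k → ℝ) :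
    vnorm (M *ᵥ x) ≤ fnorm M * vnorm x := by
  refine sq_imp_le (vnorm_nonneg _) (mul_nonneg (fnorm_nonneg _) (vnorm_nonneg _)) ?_
  rw [mul_pow, vnorm_sq, vnorm_sq, fnorm, Real.sq_sqrt (by positivity)]
  calc ∑ j, (M *ᵥ x) j ^ 2 ≤ ∑ j, (∑ i, M j i ^ 2) * (∑ i, x i ^ 2) := by
        refine Finset.sum_le_sum fun j _ => ?_
        simpa [mulVec, dotProduct] using
          Finset.sum_mul_sq_le_sq_mul_sq Finset.univ (M j) x
    _ = (∑ j, ∑ i, M j i ^ 2) * ∑ i, x i ^ 2 := by rw [Finset.sum_mul]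

lemma fnorm_transpose {m k : ℕ} (M : Matrix (Fin m) (Fin k) ℝ) : fnorm Mᵀ = fnorm M := by
  rw [fnorm, fnorm]; congr 1; rw [Finset.sum_comm]; rfl

lemma vecMul_le_fnorm {m k : ℕ} (M : Matrix (Fin m) (Fin k) ℝ) (x : Fin m → ℝ) :
    vnorm (x ᵥ* M) ≤ fnorm M * vnorm x := by
  rw [← Matrix.mulVec_transpose, ← fnorm_transpose]
  exact mulVec_le_fnorm Mᵀ x
lemma opnorm_nonneg {m k : ℕ} (M : Matrix (Fin m) (Fin k) ℝ) : 0 ≤ opnorm M :=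
  Real.sSup_nonneg (by rintro c ⟨x, hx, rfl⟩; exact vnorm_nonneg _)

lemma opnorm_le {m k : ℕ} {M : Matrix (Fin m) (Fin k) ℝ} {C : ℝ} (hC : 0 ≤ C)
    (h : ∀ x : Fin k → ℝ, vnorm x = 1 → vnorm (M *ᵥ x) ≤ C) : opnorm M ≤ C :=
  Real.sSup_le (by rintro c ⟨x, hx, rfl⟩; exact h x hx) hC

lemma opnorm_bddAbove {m k : ℕ} (M : Matrix (Fin m) (Fin k) ℝ) :
    BddAbove {c | ∃ x : Fin k → ℝ, vnorm x = 1 ∧ c = vnorm (M.mulVec x)} := by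
  refine ⟨fnorm M, ?_⟩
  rintro c ⟨x, hx, rfl⟩
  calc vnorm (M *ᵥ x) ≤ fnorm M * vnorm x := mulVec_le_fnorm M x
    _ = fnorm M := by rw [hx, mul_one]

lemma mulVec_le_opnorm {m k : ℕ} (M : Matrix (Fin m) (Fin k) ℝ) (x : Fin k → ℝ) :
    vnorm (M *ᵥ x) ≤ opnorm M * vnorm x := by
  rcases eq_or_ne (vnorm x) 0 with h0 | h0
  · simp [vnorm_eq_zero h0, vnorm_zero]
  · have hpos : 0 < vnorm x := lt_of_le_of_ne (vnorm_nonneg x) (Ne.symm h0)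
    set u : Fin k → ℝ := (vnorm x)⁻¹ • x with hu
    have hu1 : vnorm u = 1 := by
      rw [hu, vnorm_smul, abs_of_pos (inv_pos.2 hpos), inv_mul_cancel₀ h0]
    have hmem : vnorm (M *ᵥ u) ∈ {c | ∃ y : Fin k → ℝ, vnorm y = 1 ∧ c = vnorm (M.mulVec y)} :=
      ⟨u, hu1, rfl⟩
    have hle : vnorm (M *ᵥ u) ≤ opnorm M := le_csSup (opnorm_bddAbove M) hmem
    rw [hu, Matrix.mulVec_smul, vnorm_smul, abs_of_pos (inv_pos.2 hpos)] at hle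
    calc vnorm (M *ᵥ x) = (vnorm x)⁻¹ * vnorm (M *ᵥ x) * vnorm x := by
          field_simp
      _ ≤ opnorm M * vnorm x := by
          exact mul_le_mul_of_nonneg_right hle (le_of_lt hpos)

lemma vecMul_le_opnorm {m k : ℕ} (M : Matrix (Fin m) (Fin k) ℝ) (x : Fin m → ℝ) :
    vnorm (x ᵥ* M) ≤ opnorm M * vnorm x := by
  set w := x ᵥ* M with hw
  have h1 : vnorm w ^ 2 = x ⬝ᵥ (M *ᵥ w) := by
    rw [vnorm_sq_eq_dot, Matrix.dotProduct_mulVec, hw]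
  have h2 : x ⬝ᵥ (M *ᵥ w) ≤ vnorm x * (opnorm M * vnorm w) :=
    le_trans (dot_le x (M *ᵥ w)) (mul_le_mul_of_nonneg_left (mulVec_le_opnorm M w)
      (vnorm_nonneg x))
  rcases eq_or_ne (vnorm w) 0 with h0 | h0
  · rw [h0]; exact mul_nonneg (opnorm_nonneg M) (vnorm_nonneg x)
  · have hpos : 0 < vnorm w := lt_of_le_of_ne (vnorm_nonneg w) (Ne.symm h0)
    nlinarith [vnorm_nonneg x, opnorm_nonneg M]

lemma smin_le {m k : ℕ} (M : Matrix (Fin m) (Fin k) ℝ) {x : Fin m → ℝ} (hx : vnorm x = 1) :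
    smin M ≤ vnorm (x ᵥ* M) := by
  refine csInf_le ⟨0, ?_⟩ ⟨x, hx, rfl⟩
  rintro c ⟨y, hy, rfl⟩; exact vnorm_nonneg _

lemma le_smin {m k : ℕ} {M : Matrix (Fin m) (Fin k) ℝ} {C : ℝ} (x0 : Fin m → ℝ)
    (hx0 : vnorm x0 = 1) (h : ∀ x : Fin m → ℝ, vnorm x = 1 → C ≤ vnorm (x ᵥ* M)) :
    C ≤ smin M := by
  refine le_csInf ⟨_, ⟨x0, hx0, rfl⟩⟩ ?_
  rintro c ⟨y, hy, rfl⟩; exact h y hy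

lemma smin_mul_le {m k : ℕ} (M : Matrix (Fin m) (Fin k) ℝ) (x : Fin m → ℝ) :
    smin M * vnorm x ≤ vnorm (x ᵥ* M) := by
  rcases eq_or_ne (vnorm x) 0 with h0 | h0
  · rw [h0, mul_zero]; exact vnorm_nonneg _
  · have hpos : 0 < vnorm x := lt_of_le_of_ne (vnorm_nonneg x) (Ne.symm h0)
    set u : Fin m → ℝ := (vnorm x)⁻¹ • x with hu
    have hu1 : vnorm u = 1 := by
      rw [hu, vnorm_smul, abs_of_pos (inv_pos.2 hpos), inv_mul_cancel₀ h0]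
    have := smin_le M hu1
    rw [hu, Matrix.smul_vecMul, vnorm_smul, abs_of_pos (inv_pos.2 hpos)] at this
    calc smin M * vnorm x ≤ (vnorm x)⁻¹ * vnorm (x ᵥ* M) * vnorm x :=
          mul_le_mul_of_nonneg_right this (le_of_lt hpos)
      _ = vnorm (x ᵥ* M) := by field_simp

lemma vnorm_mulVec_iso {nn k : ℕ} {A : Matrix (Fin nn) (Fin k) ℝ} (hA : Aᵀ * A = 1)
    (w : Fin k → ℝ) : vnorm (A *ᵥ w) = vnorm w := by
  rw [vnorm_eq_sqrt_dot, vnorm_eq_sqrt_dot]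
  congr 1
  calc (A *ᵥ w) ⬝ᵥ (A *ᵥ w) = ((A *ᵥ w) ᵥ* A) ⬝ᵥ w := by rw [← Matrix.dotProduct_mulVec]
    _ = (Aᵀ *ᵥ (A *ᵥ w)) ⬝ᵥ w := by rw [Matrix.mulVec_transpose]
    _ = ((Aᵀ * A) *ᵥ w) ⬝ᵥ w := by rw [Matrix.mulVec_mulVec]
    _ = w ⬝ᵥ w := by rw [hA, Matrix.one_mulVec]

lemma vnorm_transpose_mulVec_le {nn k : ℕ} {A : Matrix (Fin nn) (Fin k) ℝ} (hA : Aᵀ * A = 1)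
    (v : Fin nn → ℝ) : vnorm (Aᵀ *ᵥ v) ≤ vnorm v := by
  set w := Aᵀ *ᵥ v with hw
  have h1 : vnorm w ^ 2 = (A *ᵥ w) ⬝ᵥ v := by
    calc vnorm w ^ 2 = w ⬝ᵥ (Aᵀ *ᵥ v) := by rw [vnorm_sq_eq_dot]
      _ = (w ᵥ* Aᵀ) ⬝ᵥ v := Matrix.dotProduct_mulVec _ _ _
      _ = (A *ᵥ w) ⬝ᵥ v := by rw [Matrix.vecMul_transpose]
  have h2 : (A *ᵥ w) ⬝ᵥ v ≤ vnorm w * vnorm v := by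
    have := dot_le (A *ᵥ w) v
    rwa [vnorm_mulVec_iso hA] at this
  rcases eq_or_ne (vnorm w) 0 with h0 | h0
  · rw [h0]; exact vnorm_nonneg v
  · have hpos : 0 < vnorm w := lt_of_le_of_ne (vnorm_nonneg w) (Ne.symm h0)
    nlinarith

lemma pythagoras {nn r : ℕ} {A : Matrix (Fin nn) (Fin r) ℝ} (hA : Aᵀ * A = 1)
    (v : Fin nn → ℝ) :
    vnorm (Aᵀ *ᵥ v) ^ 2 + vnorm ((1 - A * Aᵀ) *ᵥ v) ^ 2 = vnorm v ^ 2 := by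
  set P := A * Aᵀ with hP
  have hPsymm : Pᵀ = P := by rw [hP, Matrix.transpose_mul, Matrix.transpose_transpose]
  have hPidem : P * P = P := by
    rw [hP, Matrix.mul_assoc, ← Matrix.mul_assoc Aᵀ A Aᵀ, hA, Matrix.one_mul]
  set a := P *ᵥ v with ha
  set b := (1 - P) *ᵥ v with hb
  have hab : a + b = v := by
    rw [ha, hb, ← Matrix.add_mulVec]
    simp
  have hcross : a ⬝ᵥ b = 0 := by
    rw [ha, hb, dotProduct_comm, Matrix.dotProduct_mulVec, ← Matrix.mulVec_transpose, hPsymm,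
      Matrix.mulVec_mulVec, Matrix.mul_sub, Matrix.mul_one, hPidem, sub_self]
    simp
  have haa : vnorm a = vnorm (Aᵀ *ᵥ v) := by
    rw [ha, hP, ← Matrix.mulVec_mulVec, vnorm_mulVec_iso hA]
  have hvv : vnorm v ^ 2 = vnorm a ^ 2 + 2 * (a ⬝ᵥ b) + vnorm b ^ 2 := by
    rw [← hab, vnorm_sq_eq_dot, vnorm_sq_eq_dot, vnorm_sq_eq_dot, add_dotProduct,
      dotProduct_add, dotProduct_add, dotProduct_comm b a]; ring
  rw [hvv, hcross, ← haa]; ring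
lemma vnorm_neg {m : ℕ} (v : Fin m → ℝ) : vnorm (-v) = vnorm v := by
  have := vnorm_smul (-1 : ℝ) v
  simpa using this

theorem singular_value_bounds_for_B {n r q : ℕ} (δ : ℝ) (hδ : 0 ≤ δ)
    (Ustar U : Matrix (Fin n) (Fin r) ℝ) (Bstar B : Matrix (Fin r) (Fin q) ℝ)
    (σmax σmin : ℝ) (hσmax : σmax = opnorm Bstar) (hσmin : σmin = smin Bstar)
    (hσminpos : 0 < σmin)
    (hUstar : Ustarᵀ * Ustar = 1) (hU : Uᵀ * U = 1)
    (hSE2 : opnorm ((1 - Ustar * Ustarᵀ) * U) ≤ δ)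
    (hB : fnorm (B - Uᵀ * (Ustar * Bstar)) ≤ δ * σmax) :
    opnorm B ≤ (1 + δ) * σmax ∧
    smin B ≥ Real.sqrt (1 - δ ^ 2) * σmin - δ * σmax ∧
    (δ ≤ 0.01 / (σmax / σmin) → smin B ≥ 0.9 * σmin ∧ opnorm B ≤ 1.1 * σmax) := by
  set G := Uᵀ * (Ustar * Bstar) with hG
  have hσmax0 : 0 ≤ σmax := hσmax ▸ opnorm_nonneg Bstar
  -- r is positive
  have hr : 0 < r := by
    rcases Nat.eq_zero_or_pos r with hr0 | hr
    · exfalso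
      have hempty : {c | ∃ x : Fin r → ℝ, vnorm x = 1 ∧ c = vnorm (Bstar.vecMul x)} = ∅ := by
        rw [Set.eq_empty_iff_forall_notMem]
        rintro c ⟨x, hx, rfl⟩
        have : vnorm x = 0 := by
          rw [vnorm]
          subst hr0
          simp
        rw [this] at hx; norm_num at hx
      have : σmin = 0 := by rw [hσmin, smin, hempty, Real.sInf_empty]
      linarith
    · exact hr
  -- a unit vector in Fin r → ℝ
  set e : Fin r → ℝ := fun i => if i = (⟨0, hr⟩ : Fin r) then 1 else 0 with he
  have he1 : vnorm e = 1 := by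
    rw [vnorm]
    have : (∑ i, e i ^ 2) = 1 := by
      rw [he]
      rw [Finset.sum_eq_single (⟨0, hr⟩ : Fin r)]
      · simp
      · intro i _ hi; simp [hi]
      · intro h; simp at h
    rw [this, Real.sqrt_one]
  -- σmin ≤ σmax
  have hmm : σmin ≤ σmax := by
    calc σmin = smin Bstar := hσmin
      _ ≤ vnorm (e ᵥ* Bstar) := smin_le Bstar he1
      _ ≤ opnorm Bstar * vnorm e := vecMul_le_opnorm Bstar e
      _ = σmax := by rw [he1, hσmax, mul_one]
  -- Claim 1
  have claim1 : opnorm B ≤ (1 + δ) * σmax := by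
    refine opnorm_le (by nlinarith) ?_
    intro x hx
    have hBx : B *ᵥ x = (B - G) *ᵥ x + G *ᵥ x := by
      rw [← Matrix.add_mulVec, sub_add_cancel]
    have h1 : vnorm ((B - G) *ᵥ x) ≤ δ * σmax := by
      calc vnorm ((B - G) *ᵥ x) ≤ fnorm (B - G) * vnorm x := mulVec_le_fnorm _ _
        _ = fnorm (B - G) := by rw [hx, mul_one]
        _ ≤ δ * σmax := hB
    have h2 : vnorm (G *ᵥ x) ≤ σmax := by
      have hGx : G *ᵥ x = Uᵀ *ᵥ (Ustar *ᵥ (Bstar *ᵥ x)) := by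
        rw [hG, ← Matrix.mulVec_mulVec, ← Matrix.mulVec_mulVec]
      rw [hGx]
      calc vnorm (Uᵀ *ᵥ (Ustar *ᵥ (Bstar *ᵥ x))) ≤ vnorm (Ustar *ᵥ (Bstar *ᵥ x)) :=
            vnorm_transpose_mulVec_le hU _
        _ = vnorm (Bstar *ᵥ x) := vnorm_mulVec_iso hUstar _
        _ ≤ opnorm Bstar * vnorm x := mulVec_le_opnorm _ _
        _ = σmax := by rw [hx, hσmax, mul_one]
    calc vnorm (B *ᵥ x) ≤ vnorm ((B - G) *ᵥ x) + vnorm (G *ᵥ x) := by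
          rw [hBx]; exact vnorm_add_le _ _
      _ ≤ δ * σmax + σmax := add_le_add h1 h2
      _ = (1 + δ) * σmax := by ring
  -- Claim 2
  have claim2 : smin B ≥ Real.sqrt (1 - δ ^ 2) * σmin - δ * σmax := by
    refine le_smin e he1 ?_
    intro x hx
    set v : Fin n → ℝ := U *ᵥ x with hv
    have hv1 : vnorm v = 1 := by rw [hv, vnorm_mulVec_iso hU, hx]
    set w : Fin r → ℝ := Ustarᵀ *ᵥ v with hw
    -- x ᵥ* G = w ᵥ* Bstar
    have hxG : x ᵥ* G = w ᵥ* Bstar := by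
      rw [hw, hv, Matrix.mulVec_transpose, ← Matrix.vecMul_transpose (A := U) (x := x)]
      rw [Matrix.vecMul_vecMul, Matrix.vecMul_vecMul, hG]
    -- the projection bound
    have hproj : vnorm ((1 - Ustar * Ustarᵀ) *ᵥ v) ≤ δ := by
      rw [hv, Matrix.mulVec_mulVec]
      calc vnorm (((1 - Ustar * Ustarᵀ) * U) *ᵥ x)
          ≤ opnorm ((1 - Ustar * Ustarᵀ) * U) * vnorm x := mulVec_le_opnorm _ _
        _ ≤ δ := by rw [hx, mul_one]; exact hSE2
    have hpyth := pythagoras hUstar v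
    rw [hv1] at hpyth
    have hw2 : 1 - δ ^ 2 ≤ vnorm w ^ 2 := by
      have : vnorm ((1 - Ustar * Ustarᵀ) *ᵥ v) ^ 2 ≤ δ ^ 2 := by
        have h0 := vnorm_nonneg ((1 - Ustar * Ustarᵀ) *ᵥ v)
        nlinarith
      rw [← hw] at hpyth
      nlinarith
    have hwge : Real.sqrt (1 - δ ^ 2) ≤ vnorm w := by
      calc Real.sqrt (1 - δ ^ 2) ≤ Real.sqrt (vnorm w ^ 2) := Real.sqrt_le_sqrt hw2
        _ = vnorm w := Real.sqrt_sq (vnorm_nonneg w)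
    have hxGlow : Real.sqrt (1 - δ ^ 2) * σmin ≤ vnorm (x ᵥ* G) := by
      rw [hxG]
      calc Real.sqrt (1 - δ ^ 2) * σmin ≤ σmin * vnorm w := by
            rw [mul_comm]
            exact mul_le_mul_of_nonneg_left hwge (le_of_lt hσminpos)
        _ = smin Bstar * vnorm w := by rw [hσmin]
        _ ≤ vnorm (w ᵥ* Bstar) := smin_mul_le _ _
    have hxBG : vnorm (x ᵥ* (B - G)) ≤ δ * σmax := by
      calc vnorm (x ᵥ* (B - G)) ≤ fnorm (B - G) * vnorm x := vecMul_le_fnorm _ _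
        _ = fnorm (B - G) := by rw [hx, mul_one]
        _ ≤ δ * σmax := hB
    have hsplit : x ᵥ* G = x ᵥ* B + -(x ᵥ* (B - G)) := by
      rw [Matrix.vecMul_sub]
      abel
    have htri : vnorm (x ᵥ* G) ≤ vnorm (x ᵥ* B) + vnorm (x ᵥ* (B - G)) := by
      calc vnorm (x ᵥ* G) = vnorm (x ᵥ* B + -(x ᵥ* (B - G))) := by rw [← hsplit]
        _ ≤ vnorm (x ᵥ* B) + vnorm (-(x ᵥ* (B - G))) := vnorm_add_le _ _
        _ = vnorm (x ᵥ* B) + vnorm (x ᵥ* (B - G)) := by rw [vnorm_neg]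
    linarith
  refine ⟨claim1, claim2, ?_⟩
  intro hδ2
  have hσmaxpos : 0 < σmax := lt_of_lt_of_le hσminpos hmm
  have hδ2' : δ ≤ 0.01 * σmin / σmax := by
    rw [div_div_eq_mul_div] at hδ2
    exact hδ2
  have hδσ : δ * σmax ≤ 0.01 * σmin := by
    rw [le_div_iff₀ hσmaxpos] at hδ2'
    linarith
  have hδ01 : δ ≤ 0.01 := by nlinarith
  have h99 : (0.99 : ℝ) ≤ Real.sqrt (1 - δ ^ 2) := by
    have h1 : (0.99 : ℝ) ^ 2 ≤ 1 - δ ^ 2 := by nlinarith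
    calc (0.99 : ℝ) = Real.sqrt (0.99 ^ 2) := by
          rw [Real.sqrt_sq]; norm_num
      _ ≤ Real.sqrt (1 - δ ^ 2) := Real.sqrt_le_sqrt h1
  constructor
  · have h1 : 0.99 * σmin ≤ Real.sqrt (1 - δ ^ 2) * σmin :=
      mul_le_mul_of_nonneg_right h99 (le_of_lt hσminpos)
    linarith [claim2, hδσ, hσminpos]
  · have h2 : (1 + δ) * σmax = σmax + δ * σmax := by ring
    linarith [claim1, hδσ, hmm, hσmax0]
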